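/- For the delayed ERW whose memory after time m is {1,...,m}: E(S_n | F_m) = (S_m/m)( n(p-q) + m(1+q-p) ) for n > m, where F_m = sigma(X_1,...,X_m). -/

import Mathlib

open MeasureTheory ProbabilityTheory Filter
open scoped ENNReal NNReal Topology

noncomputable section

variable {Ω : Type*} [MeasurableSpace Ω]

/-- The sigma-algebra generated by the steps `X i` with indices `i` in `s`. -/
def memSigma (X : ℕ → Ω → ℝ) (s : Finset ℕ) : MeasurableSpace Ω :=
  ⨆ i ∈ s, MeasurableSpace.comap (X i) inferInstance

/-- The position `S_n = X_1 + ⋯ + X_n` of the walk after `n` steps. -/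
def pos (X : ℕ → Ω → ℝ) (n : ℕ) (ω : Ω) : ℝ := ∑ k ∈ Finset.Icc 1 n, X k ω

/-- Step `j` of an ERW with memory `mem`: there are a uniformly distributed index `K` on
`mem` and a sign `ε` equal to `1` with probability `p` and `-1` with probability `1-p`,
independent of each other and of the past, such that `X j = ε * X K`. -/
def erwStep (μ : Measure Ω) (p : ℝ) (X : ℕ → Ω → ℝ) (mem : Finset ℕ) (j : ℕ) : Prop :=
  ∃ K : Ω → ℕ, ∃ ε : Ω → ℝ, Measurable K ∧ Measurable ε ∧
    (∀ ω, K ω ∈ mem) ∧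
    (∀ k ∈ mem, μ {ω | K ω = k} = (mem.card : ℝ≥0∞)⁻¹) ∧
    μ {ω | ε ω = 1} = ENNReal.ofReal p ∧
    μ {ω | ε ω = -1} = ENNReal.ofReal (1 - p) ∧
    IndepFun K ε μ ∧
    Indep (MeasurableSpace.comap (fun ω => (K ω, ε ω)) inferInstance)
      (memSigma X (Finset.Icc 1 (j - 1))) μ ∧
    (∀ ω, X j ω = ε ω * X (K ω) ω)

/-- The first step of the ERW is `+1` with probability `p` and `-1` with probability `1-p`. -/
def erwInit (μ : Measure Ω) (p : ℝ) (X : ℕ → Ω → ℝ) : Prop :=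
  μ {ω | X 1 ω = 1} = ENNReal.ofReal p ∧ μ {ω | X 1 ω = -1} = ENNReal.ofReal (1 - p)

/-- Step `j` of a delayed ERW with memory `mem`: `K` uniform on `mem` and a sign `ε`
equal to `1`, `-1`, `0` with probabilities `p`, `q`, `r`, independent of each other and
of the past, with `X j = ε * X K`. -/
def erwStepDelay (μ : Measure Ω) (p q r : ℝ) (X : ℕ → Ω → ℝ) (mem : Finset ℕ) (j : ℕ) :
    Prop :=
  ∃ K : Ω → ℕ, ∃ ε : Ω → ℝ, Measurable K ∧ Measurable ε ∧
    (∀ ω, K ω ∈ mem) ∧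
    (∀ k ∈ mem, μ {ω | K ω = k} = (mem.card : ℝ≥0∞)⁻¹) ∧
    μ {ω | ε ω = 1} = ENNReal.ofReal p ∧
    μ {ω | ε ω = -1} = ENNReal.ofReal q ∧
    μ {ω | ε ω = 0} = ENNReal.ofReal r ∧
    IndepFun K ε μ ∧
    Indep (MeasurableSpace.comap (fun ω => (K ω, ε ω)) inferInstance)
      (memSigma X (Finset.Icc 1 (j - 1))) μ ∧
    (∀ ω, X j ω = ε ω * X (K ω) ω)

/-- The first step of the delayed ERW is `1`, `-1`, `0` with probabilities `p`, `q`, `r`. -/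
def erwInitDelay (μ : Measure Ω) (p q r : ℝ) (X : ℕ → Ω → ℝ) : Prop :=
  μ {ω | X 1 ω = 1} = ENNReal.ofReal p ∧ μ {ω | X 1 ω = -1} = ENNReal.ofReal q ∧
    μ {ω | X 1 ω = 0} = ENNReal.ofReal r

/-- The number `N*_n` of nonzero steps among the first `n`, as a real number. -/
def nonzeroCount (X : ℕ → Ω → ℝ) (n : ℕ) (ω : Ω) : ℝ :=
  ∑ k ∈ Finset.Icc 1 n, if X k ω ≠ 0 then (1 : ℝ) else 0

/-- Independence is monotone in the second σ-algebra. -/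
lemma indep_mono_right' {m₁ m₂ m₂' : MeasurableSpace Ω} {μ : Measure Ω}
    (h : Indep m₁ m₂ μ) (hle : m₂' ≤ m₂) : Indep m₁ m₂' μ := by
  rw [ProbabilityTheory.Indep_iff] at h ⊢
  exact fun t1 t2 h1 h2 => h t1 t2 h1 (hle _ h2)

lemma memSigma_le {X : ℕ → Ω → ℝ} (hX : ∀ i, Measurable (X i)) (s : Finset ℕ) :
    memSigma X s ≤ ‹MeasurableSpace Ω› :=
  iSup₂_le fun i _ => measurable_iff_comap_le.mp (hX i)

lemma memSigma_mono (X : ℕ → Ω → ℝ) {s t : Finset ℕ} (h : s ⊆ t) :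
    memSigma X s ≤ memSigma X t :=
  iSup₂_le fun i hi =>
    le_iSup₂ (f := fun i (_ : i ∈ t) => MeasurableSpace.comap (X i) inferInstance) i (h hi)

lemma stronglyMeasurable_memSigma {X : ℕ → Ω → ℝ} {s : Finset ℕ} {k : ℕ} (hk : k ∈ s) :
    StronglyMeasurable[memSigma X s] (X k) := by
  have h : Measurable[memSigma X s] (X k) := measurable_iff_comap_le.mpr
    (le_iSup₂ (f := fun i (_ : i ∈ s) => MeasurableSpace.comap (X i) inferInstance) k hk)
  exact h.stronglyMeasurable

/-- A random variable with the three prescribed atoms takes values in `{1,-1,0}` a.e. -/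
lemma tri_ae (μ : Measure Ω) [IsProbabilityMeasure μ] {p q r : ℝ}
    (hp : 0 ≤ p) (hq : 0 ≤ q) (hr : 0 ≤ r) (hpqr : p + q + r = 1)
    {ε : Ω → ℝ} (hε : Measurable ε)
    (h1 : μ {ω | ε ω = 1} = ENNReal.ofReal p)
    (h2 : μ {ω | ε ω = -1} = ENNReal.ofReal q)
    (h3 : μ {ω | ε ω = 0} = ENNReal.ofReal r) :
    ∀ᵐ ω ∂μ, ε ω = 1 ∨ ε ω = -1 ∨ ε ω = 0 := by
  have hA : MeasurableSet {ω | ε ω = 1} := hε (measurableSet_singleton 1)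
  have hB : MeasurableSet {ω | ε ω = -1} := hε (measurableSet_singleton (-1))
  have hC : MeasurableSet {ω | ε ω = 0} := hε (measurableSet_singleton 0)
  have hd1 : Disjoint {ω | ε ω = -1} {ω | ε ω = 0} := by
    rw [Set.disjoint_left]
    intro ω ha hb
    simp only [Set.mem_setOf_eq] at ha hb
    rw [ha] at hb; norm_num at hb
  have hd2 : Disjoint {ω | ε ω = 1} ({ω | ε ω = -1} ∪ {ω | ε ω = 0}) := by
    rw [Set.disjoint_left]
    intro ω ha hb
    simp only [Set.mem_setOf_eq, Set.mem_union] at ha hb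
    rcases hb with hb | hb <;> rw [ha] at hb <;> norm_num at hb
  have hU : μ ({ω | ε ω = 1} ∪ ({ω | ε ω = -1} ∪ {ω | ε ω = 0})) = 1 := by
    rw [measure_union hd2 (hB.union hC), measure_union hd1 hC, h1, h2, h3,
      ← ENNReal.ofReal_add hq hr, ← ENNReal.ofReal_add hp (by positivity),
      show p + (q + r) = 1 by linarith, ENNReal.ofReal_one]
  have hcompl : μ ({ω | ε ω = 1} ∪ ({ω | ε ω = -1} ∪ {ω | ε ω = 0}))ᶜ = 0 := by
    rw [measure_compl (hA.union (hB.union hC)) (measure_ne_top _ _), hU, measure_univ,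
      tsub_self]
  have hset : {a | ¬(ε a = 1 ∨ ε a = -1 ∨ ε a = 0)}
      = ({ω | ε ω = 1} ∪ ({ω | ε ω = -1} ∪ {ω | ε ω = 0}))ᶜ := by
    ext ω; simp [not_or]
  rw [ae_iff, hset]
  exact hcompl

/-- The expectation of the sign variable is `p - q`. -/
lemma tri_integral (μ : Measure Ω) [IsProbabilityMeasure μ] {p q r : ℝ}
    (hp : 0 ≤ p) (hq : 0 ≤ q) (hr : 0 ≤ r) (hpqr : p + q + r = 1)
    {ε : Ω → ℝ} (hε : Measurable ε)
    (h1 : μ {ω | ε ω = 1} = ENNReal.ofReal p)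
    (h2 : μ {ω | ε ω = -1} = ENNReal.ofReal q)
    (h3 : μ {ω | ε ω = 0} = ENNReal.ofReal r) :
    ∫ ω, ε ω ∂μ = p - q := by
  have hA : MeasurableSet {ω | ε ω = 1} := hε (measurableSet_singleton 1)
  have hB : MeasurableSet {ω | ε ω = -1} := hε (measurableSet_singleton (-1))
  have hae := tri_ae μ hp hq hr hpqr hε h1 h2 h3
  have heq : ε =ᵐ[μ] fun ω => Set.indicator {ω | ε ω = 1} (fun _ => (1 : ℝ)) ω
      + Set.indicator {ω | ε ω = -1} (fun _ => (-1 : ℝ)) ω := by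
    filter_upwards [hae] with ω h
    rcases h with h | h | h <;>
      norm_num [Set.indicator_apply, Set.mem_setOf_eq, h]
  rw [integral_congr_ae heq,
    integral_add ((integrable_const (1 : ℝ)).indicator hA)
      ((integrable_const (-1 : ℝ)).indicator hB),
    integral_indicator_const _ hA, integral_indicator_const _ hB, measureReal_def, measureReal_def, h1, h2,
    ENNReal.toReal_ofReal hp, ENNReal.toReal_ofReal hq]
  simp only [smul_eq_mul]
  ring

/-- The steps of the delayed ERW are bounded by `1` a.e. -/
lemma erw_bound (μ : Measure Ω) [IsProbabilityMeasure μ] {p q r : ℝ}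
    (hp : 0 ≤ p) (hq : 0 ≤ q) (hr : 0 ≤ r) (hpqr : p + q + r = 1)
    {X : ℕ → Ω → ℝ} (hX : ∀ i, Measurable (X i))
    (hinit : erwInitDelay μ p q r X) (m n : ℕ)
    (hpre : ∀ j, 2 ≤ j → j ≤ m → erwStepDelay μ p q r X (Finset.Icc 1 (j - 1)) j)
    (hpost : ∀ j, m < j → j ≤ n → erwStepDelay μ p q r X (Finset.Icc 1 m) j) :
    ∀ j, 1 ≤ j → j ≤ n → ∀ᵐ ω ∂μ, |X j ω| ≤ 1 := by
  intro j
  induction j using Nat.strong_induction_on with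
  | _ j ih =>
    intro hj1 hjn
    rcases eq_or_lt_of_le hj1 with h1 | h2
    · obtain ⟨i1, i2, i3⟩ := hinit
      have hae := tri_ae μ hp hq hr hpqr (hX 1) i1 i2 i3
      rw [← h1]
      filter_upwards [hae] with ω h
      rcases h with h | h | h <;> rw [h] <;> norm_num
    · obtain ⟨mem, hstep, hmem_lt⟩ :
          ∃ mem, erwStepDelay μ p q r X mem j ∧ ∀ k ∈ mem, 1 ≤ k ∧ k < j ∧ k ≤ n := by
        by_cases hjm : j ≤ m
        · exact ⟨_, hpre j h2 hjm, fun k hk => by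
            simp only [Finset.mem_Icc] at hk; omega⟩
        · exact ⟨_, hpost j (by omega) hjn, fun k hk => by
            simp only [Finset.mem_Icc] at hk; omega⟩
      obtain ⟨K, ε, hKm, hεm, hKmem, _, hε1, hε2, hε3, _, _, hXj⟩ := hstep
      have hεae := tri_ae μ hp hq hr hpqr hεm hε1 hε2 hε3
      have hall : ∀ᵐ ω ∂μ, ∀ k ∈ (mem : Set ℕ), |X k ω| ≤ 1 := by
        rw [ae_ball_iff mem.countable_toSet]
        intro k hk
        obtain ⟨hk1, hk2, hk3⟩ := hmem_lt k hk
        exact ih k hk2 hk1 hk3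
      filter_upwards [hεae, hall] with ω hεv hk
      rw [hXj ω, abs_mul]
      have hb1 : |ε ω| ≤ 1 := by rcases hεv with h | h | h <;> rw [h] <;> norm_num
      have hb2 : |X (K ω) ω| ≤ 1 := hk _ (Finset.mem_coe.mpr (hKmem ω))
      calc |ε ω| * |X (K ω) ω| ≤ 1 * 1 :=
            mul_le_mul hb1 hb2 (abs_nonneg _) zero_le_one
        _ = 1 := mul_one 1

set_option maxHeartbeats 2000000 in
/-- delayed ERW with memory frozen at `{1,…,m}` after time `m`:
`E(S_n | F_m) = (S_m/m)(n(p-q) + m(1+q-p))` for `n > m`. -/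
theorem stmt_12
    (μ : Measure Ω) [IsProbabilityMeasure μ]
    (p q r : ℝ) (hp : 0 ≤ p) (hq : 0 ≤ q) (hr : 0 ≤ r) (hpqr : p + q + r = 1)
    (X : ℕ → Ω → ℝ) (hX : ∀ i, Measurable (X i))
    (hinit : erwInitDelay μ p q r X)
    (m n : ℕ) (hm : 1 ≤ m) (hmn : m < n)
    (hpre : ∀ j, 2 ≤ j → j ≤ m → erwStepDelay μ p q r X (Finset.Icc 1 (j - 1)) j)
    (hpost : ∀ j, m < j → j ≤ n → erwStepDelay μ p q r X (Finset.Icc 1 m) j) :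
    μ[pos X n | memSigma X (Finset.Icc 1 m)]
      =ᵐ[μ] fun ω => pos X m ω / m * ((n : ℝ) * (p - q) + m * (1 + q - p)) := by
  have hle : memSigma X (Finset.Icc 1 m) ≤ ‹MeasurableSpace Ω› := memSigma_le hX _
  have hbd : ∀ j, 1 ≤ j → j ≤ n → ∀ᵐ ω ∂μ, |X j ω| ≤ 1 :=
    erw_bound μ hp hq hr hpqr hX hinit m n hpre hpost
  have hint : ∀ j, 1 ≤ j → j ≤ n → Integrable (X j) μ := fun j hj1 hj2 =>
    (integrable_const (1 : ℝ)).mono' (hX j).aestronglyMeasurable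
      (by simpa [Real.norm_eq_abs] using hbd j hj1 hj2)
  -- S_m is measurable and integrable
  have hSm : StronglyMeasurable[memSigma X (Finset.Icc 1 m)] (pos X m) :=
    Finset.stronglyMeasurable_fun_sum (Finset.Icc 1 m) fun k hk => stronglyMeasurable_memSigma hk
  have hSmInt : Integrable (pos X m) μ :=
    integrable_finset_sum (Finset.Icc 1 m) fun k hk => by
      simp only [Finset.mem_Icc] at hk
      exact hint k hk.1 (hk.2.trans hmn.le)
  -- key step: conditional expectation of a post-`m` step
  have key : ∀ j ∈ Finset.Icc (m + 1) n,
      μ[X j | memSigma X (Finset.Icc 1 m)]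
        =ᵐ[μ] fun ω => pos X m ω * ((m : ℝ)⁻¹ * (p - q)) := by
    intro j hj
    simp only [Finset.mem_Icc] at hj
    obtain ⟨K, ε, hKm, hεm, hKmem, hKunif, hε1, hε2, hε3, hKε, hindep, hXj⟩ :=
      hpost j (by omega) hj.2
    have hεae := tri_ae μ hp hq hr hpqr hεm hε1 hε2 hε3
    have hεbd : ∀ᵐ ω ∂μ, |ε ω| ≤ 1 := by
      filter_upwards [hεae] with ω h
      rcases h with h | h | h <;> rw [h] <;> norm_num
    have hεint : Integrable ε μ :=
      (integrable_const (1 : ℝ)).mono' hεm.aestronglyMeasurable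
        (by simpa [Real.norm_eq_abs] using hεbd)
    have hεE : ∫ ω, ε ω ∂μ = p - q := tri_integral μ hp hq hr hpqr hεm hε1 hε2 hε3
    set g : ℕ → Ω → ℝ := fun k ω => if K ω = k then ε ω else 0 with hg
    -- measurability of g k
    have hgmeas : ∀ k, Measurable (g k) := fun k =>
      Measurable.ite (hKm (measurableSet_singleton k)) hεm measurable_const
    have hgbd : ∀ k, ∀ᵐ ω ∂μ, |g k ω| ≤ 1 := by
      intro k
      filter_upwards [hεbd] with ω h
      simp only [hg]
      split
      · exact h
      · simp
    have hgint : ∀ k, Integrable (g k) μ := fun k =>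
      (integrable_const (1 : ℝ)).mono' (hgmeas k).aestronglyMeasurable
        (by simpa [Real.norm_eq_abs] using hgbd k)
    -- decomposition of X j
    have hdecomp : X j = ∑ k ∈ Finset.Icc 1 m, X k * g k := by
      funext ω
      rw [Finset.sum_apply]
      rw [hXj ω, Finset.sum_eq_single (K ω)]
      · show ε ω * X (K ω) ω = X (K ω) ω * if K ω = K ω then ε ω else 0
        rw [if_pos rfl]; ring
      · intro k hk hne
        show X k ω * (if K ω = k then ε ω else 0) = 0
        rw [if_neg fun h => hne h.symm, mul_zero]
      · intro h; exact absurd (hKmem ω) h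
    -- integrability of the products
    have hprodint : ∀ k ∈ Finset.Icc 1 m, Integrable (X k * g k) μ := by
      intro k hk
      simp only [Finset.mem_Icc] at hk
      refine (integrable_const (1 : ℝ)).mono'
        ((hX k).mul (hgmeas k)).aestronglyMeasurable ?_
      filter_upwards [hbd k hk.1 (hk.2.trans hmn.le), hgbd k] with ω h1 h2
      simp only [Pi.mul_apply, Real.norm_eq_abs, abs_mul]
      calc |X k ω| * |g k ω| ≤ 1 * 1 := mul_le_mul h1 h2 (abs_nonneg _) zero_le_one
        _ = 1 := mul_one 1
    -- g k is measurable w.r.t. the comap σ-algebra of (K, ε)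
    have hgsm : ∀ k, StronglyMeasurable[MeasurableSpace.comap
        (fun ω => (K ω, ε ω)) inferInstance] (g k) := by
      intro k
      have hpair : Measurable[MeasurableSpace.comap (fun ω => (K ω, ε ω)) inferInstance]
          (fun ω => (K ω, ε ω)) := measurable_iff_comap_le.mpr le_rfl
      have h2 : Measurable fun x : ℕ × ℝ => if x.1 = k then x.2 else 0 :=
        Measurable.ite (measurable_fst (measurableSet_singleton k)) measurable_snd
          measurable_const
      exact (h2.comp hpair).stronglyMeasurable
    -- independence of comap σ-algebra and memSigma X (Icc 1 m)
    have hsub : memSigma X (Finset.Icc 1 m) ≤ memSigma X (Finset.Icc 1 (j - 1)) :=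
      memSigma_mono X (Finset.Icc_subset_Icc_right (by omega))
    have hindep' : Indep (MeasurableSpace.comap (fun ω => (K ω, ε ω)) inferInstance)
        (memSigma X (Finset.Icc 1 m)) μ := by
      rw [ProbabilityTheory.Indep_iff] at hindep ⊢
      exact fun t1 t2 h1 h2 => hindep t1 t2 h1 (hsub _ h2)
    -- expectation of g k
    have hEg : ∀ k ∈ Finset.Icc 1 m, ∫ ω, g k ω ∂μ = (m : ℝ)⁻¹ * (p - q) := by
      intro k hk
      have hsplit : g k = (fun ω => if K ω = k then (1 : ℝ) else 0) * ε := by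
        funext ω
        simp only [hg, Pi.mul_apply]
        split <;> simp
      have hfm : Measurable (fun ω => if K ω = k then (1 : ℝ) else 0) :=
        Measurable.ite (hKm (measurableSet_singleton k)) measurable_const measurable_const
      have hindf : IndepFun (fun ω => if K ω = k then (1 : ℝ) else 0) ε μ := by
        have := hKε.comp (φ := fun a : ℕ => if a = k then (1 : ℝ) else 0)
          (ψ := (id : ℝ → ℝ)) (_mγ := inferInstance) (_mγ' := inferInstance)
          (Measurable.ite (MeasurableSet.singleton k) measurable_const measurable_const)
          measurable_id
        exact this
      have hEf : ∫ ω, (if K ω = k then (1 : ℝ) else 0) ∂μ = (m : ℝ)⁻¹ := by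
        have hind : (fun ω => if K ω = k then (1 : ℝ) else 0)
            = Set.indicator {ω | K ω = k} (fun _ => (1 : ℝ)) := by
          funext ω
          simp [Set.indicator_apply, Set.mem_setOf_eq]
        have hsK : MeasurableSet {ω | K ω = k} := hKm (measurableSet_singleton k)
        rw [hind, integral_indicator_const _ hsK, measureReal_def, hKunif k hk, Nat.card_Icc]
        simp
      calc ∫ ω, g k ω ∂μ = ∫ ω, ((fun ω => if K ω = k then (1 : ℝ) else 0) * ε) ω ∂μ := by
            rw [hsplit]
        _ = (∫ ω, (if K ω = k then (1 : ℝ) else 0) ∂μ) * ∫ ω, ε ω ∂μ :=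
            hindf.integral_mul_eq_mul_integral hfm.aestronglyMeasurable hεm.aestronglyMeasurable
        _ = (m : ℝ)⁻¹ * (p - q) := by rw [hEf, hεE]
    -- conditional expectation of g k is its expectation
    have hcondg : ∀ k ∈ Finset.Icc 1 m, μ[g k | memSigma X (Finset.Icc 1 m)]
        =ᵐ[μ] fun _ => (m : ℝ)⁻¹ * (p - q) := by
      intro k hk
      have h := condExp_indep_eq (μ := μ) (f := g k)
        ((hKm.prodMk hεm).comap_le) hle (hgsm k) hindep'
      refine h.trans ?_
      rw [hEg k hk]
    -- conditional expectation of the product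
    have hcondprod : ∀ k ∈ Finset.Icc 1 m, μ[X k * g k | memSigma X (Finset.Icc 1 m)]
        =ᵐ[μ] fun ω => X k ω * ((m : ℝ)⁻¹ * (p - q)) := by
      intro k hk
      have h := condExp_mul_of_stronglyMeasurable_left (μ := μ) (stronglyMeasurable_memSigma hk)
        (hprodint k hk) (hgint k)
      refine h.trans ?_
      filter_upwards [hcondg k hk] with ω hω
      simp only [Pi.mul_apply, hω]
    -- sum up
    calc μ[X j | memSigma X (Finset.Icc 1 m)]
        = μ[∑ k ∈ Finset.Icc 1 m, X k * g k | memSigma X (Finset.Icc 1 m)] := by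
          rw [hdecomp]
      _ =ᵐ[μ] ∑ k ∈ Finset.Icc 1 m, μ[X k * g k | memSigma X (Finset.Icc 1 m)] :=
          condExp_finset_sum hprodint _
      _ =ᵐ[μ] (fun ω => pos X m ω * ((m : ℝ)⁻¹ * (p - q))) := by
          have hall : ∀ᵐ ω ∂μ, ∀ k ∈ (Finset.Icc 1 m : Set ℕ),
              (μ[X k * g k | memSigma X (Finset.Icc 1 m)]) ω
                = X k ω * ((m : ℝ)⁻¹ * (p - q)) := by
            rw [ae_ball_iff (Finset.Icc 1 m).countable_toSet]
            intro k hk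
            exact hcondprod k (Finset.mem_coe.mp hk)
          filter_upwards [hall] with ω hω
          rw [Finset.sum_apply]
          rw [Finset.sum_congr rfl fun k hk => hω k (Finset.mem_coe.mpr hk),
            ← Finset.sum_mul]
          rfl
  -- split S_n
  have hun : Finset.Icc 1 n = Finset.Icc 1 m ∪ Finset.Icc (m + 1) n := by
    ext x; simp only [Finset.mem_Icc, Finset.mem_union]; omega
  have hdis : Disjoint (Finset.Icc 1 m) (Finset.Icc (m + 1) n) :=
    Finset.disjoint_left.mpr fun a ha hb => by
      simp only [Finset.mem_Icc] at ha hb; omega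
  have hsplit : pos X n = pos X m + ∑ j ∈ Finset.Icc (m + 1) n, X j := by
    funext ω
    simp only [Pi.add_apply, Finset.sum_apply, pos]
    rw [hun, Finset.sum_union hdis]
  have hint' : ∀ j ∈ Finset.Icc (m + 1) n, Integrable (X j) μ := by
    intro j hj
    simp only [Finset.mem_Icc] at hj
    exact hint j (by omega) hj.2
  have hSumInt : Integrable (∑ j ∈ Finset.Icc (m + 1) n, X j) μ :=
    integrable_finset_sum' _ hint'
  have hcard : (Finset.Icc (m + 1) n).card = n - m := by
    rw [Nat.card_Icc]; omega
  calc μ[pos X n | memSigma X (Finset.Icc 1 m)]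
      = μ[pos X m + ∑ j ∈ Finset.Icc (m + 1) n, X j | memSigma X (Finset.Icc 1 m)] := by
        rw [hsplit]
    _ =ᵐ[μ] μ[pos X m | memSigma X (Finset.Icc 1 m)]
        + μ[∑ j ∈ Finset.Icc (m + 1) n, X j | memSigma X (Finset.Icc 1 m)] :=
        condExp_add hSmInt hSumInt _
    _ =ᵐ[μ] pos X m + ∑ j ∈ Finset.Icc (m + 1) n, μ[X j | memSigma X (Finset.Icc 1 m)] := by
        rw [condExp_of_stronglyMeasurable hle hSm hSmInt]
        exact EventuallyEq.add EventuallyEq.rfl (condExp_finset_sum hint' _)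
    _ =ᵐ[μ] (fun ω => pos X m ω / m * ((n : ℝ) * (p - q) + m * (1 + q - p))) := by
        have hall : ∀ᵐ ω ∂μ, ∀ j ∈ (Finset.Icc (m + 1) n : Set ℕ),
            (μ[X j | memSigma X (Finset.Icc 1 m)]) ω
              = pos X m ω * ((m : ℝ)⁻¹ * (p - q)) := by
          rw [ae_ball_iff (Finset.Icc (m + 1) n).countable_toSet]
          intro j hj
          exact key j (Finset.mem_coe.mp hj)
        filter_upwards [hall] with ω hω
        simp only [Pi.add_apply, Finset.sum_apply]
        rw [Finset.sum_congr rfl fun j hj => hω j (Finset.mem_coe.mpr hj),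
          Finset.sum_const, hcard, nsmul_eq_mul]
        have hm0 : (m : ℝ) ≠ 0 := Nat.cast_ne_zero.mpr (by omega)
        have hcast : ((n - m : ℕ) : ℝ) = (n : ℝ) - m := by
          rw [Nat.cast_sub hmn.le]
        rw [hcast]
        field_simp
        ring
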